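/- (3D PML corner energy estimate in Laplace space.) Let P be a real symmetric positive definite m×m matrix, A_x, A_y, A_z real symmetric m×m matrices, let d ≥ 0, α ≥ 0, γ > 0 be real, let s = a + ib ∈ ℂ with a > 0, and S = γ(1 + d/(s+α)). Let Ũ : [−1,1]³ → ℂ^m be continuously differentiable and F̃ continuous, satisfying the PML corner equation (sS)·Pˉ¹·Ũ = Σ_{ξ=x,y,z} A_ξ ∂Ũ/∂ξ + Pˉ¹·F̃ on [−1,1]³. Define ‖G‖_P² = ∫_{[−1,1]³} ½ G† Pˉ¹ G dx dy dz and BT = ¼ Σ_{ξ∈{x,y,z}} ∫ ( Ũ†A_ξŨ |_{ξ=1} − Ũ†A_ξŨ |_{ξ=−1} ) dσ over the corresponding faces. Then Re(sS) ≥ aγ > 0 and Re(sS)·‖Ũ‖_P² ≤ ‖Ũ‖_P·‖F̃‖_P + BT. -/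

import Mathlib

/-
Pair the equation with `U` and take real parts. Since `P⁻¹` is Hermitian, the left side becomes
`Re(sS) · U†P⁻¹U`, and since each `A_ξ` is symmetric, `2 Re U†A_ξ ∂_ξU = ∂_ξ (U†A_ξU)`; integrating
over the cube, the fundamental theorem of calculus along lines turns the flux terms into the
boundary term `BT`, while the forcing term `Re U†P⁻¹F` is bounded by the Cauchy–Schwarz inequality
for the `P⁻¹`-weighted form. Finally `Re(sS) = γ (a + d Re(s / (s + α))) ≥ aγ` because
`Re(s / (s + α)) = (a (a + α) + b²) / |s + α|² ≥ 0`.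
-/

open Matrix MeasureTheory Set
open scoped ComplexOrder

namespace Matrix

theorem IsSymm.isHermitian_map_ofReal {n : Type*} {A : Matrix n n ℝ} (hA : A.IsSymm) :
    (A.map ((↑) : ℝ → ℂ)).IsHermitian :=
  (isHermitian_iff_isSymm.mpr hA).map _ fun x => (Complex.conj_ofReal x).symm

variable {n : Type*} [Fintype n]

theorem IsHermitian.star_star_dotProduct_mulVec {M : Matrix n n ℂ} (hM : M.IsHermitian)
    (v w : n → ℂ) :
    star (star v ⬝ᵥ M *ᵥ w) = star w ⬝ᵥ M *ᵥ v := by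
  rw [star_dotProduct, star_mulVec, hM.eq, dotProduct_mulVec, star_star]

theorem IsHermitian.re_star_dotProduct_mulVec_comm {M : Matrix n n ℂ} (hM : M.IsHermitian)
    (v w : n → ℂ) :
    (star v ⬝ᵥ M *ᵥ w).re = (star w ⬝ᵥ M *ᵥ v).re := by
  rw [← hM.star_star_dotProduct_mulVec, Complex.star_def, Complex.conj_re]

theorem IsHermitian.re_mul_star_dotProduct_mulVec_self {M : Matrix n n ℂ} (hM : M.IsHermitian)
    (c : ℂ) (v : n → ℂ) :
    (c * (star v ⬝ᵥ M *ᵥ v)).re = c.re * (star v ⬝ᵥ M *ᵥ v).re := by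
  have him : (star v ⬝ᵥ M *ᵥ v).im = 0 := by
    have := congrArg Complex.im (hM.star_star_dotProduct_mulVec v v)
    rw [Complex.star_def, Complex.conj_im] at this
    linarith
  rw [Complex.mul_re, him, mul_zero, sub_zero]

theorem IsHermitian.re_star_dotProduct_mulVec_smul_add {M : Matrix n n ℂ} (hM : M.IsHermitian)
    (t : ℝ) (u v : n → ℂ) :
    (star (t • u + v) ⬝ᵥ M *ᵥ (t • u + v)).re
      = (star u ⬝ᵥ M *ᵥ u).re * (t * t) + 2 * (star u ⬝ᵥ M *ᵥ v).re * t
        + (star v ⬝ᵥ M *ᵥ v).re := by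
  simp only [star_add, star_smul, star_trivial, mulVec_add, mulVec_smul, dotProduct_add,
    add_dotProduct, dotProduct_smul, smul_dotProduct, Complex.add_re, Complex.real_smul,
    Complex.re_ofReal_mul]
  rw [hM.re_star_dotProduct_mulVec_comm v u]
  ring

theorem PosSemidef.re_star_dotProduct_mulVec_self_nonneg {M : Matrix n n ℂ} (hM : M.PosSemidef)
    (v : n → ℂ) :
    0 ≤ (star v ⬝ᵥ M *ᵥ v).re :=
  (Complex.nonneg_iff.mp (hM.dotProduct_mulVec_nonneg v)).1

theorem PosSemidef.map_ofReal {N : Matrix n n ℝ} (hN : N.PosSemidef) :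
    (N.map ((↑) : ℝ → ℂ)).PosSemidef := by
  obtain ⟨k, v, rfl⟩ := posSemidef_iff_eq_sum_vecMulVec.mp hN
  have : (∑ i, vecMulVec (v i) (star (v i))).map ((↑) : ℝ → ℂ)
      = ∑ i, vecMulVec (fun j => (v i j : ℂ)) (star fun j => (v i j : ℂ)) := by
    ext
    simp [vecMulVec_apply, sum_apply]
  rw [this]
  exact posSemidef_sum _ fun i _ => posSemidef_vecMulVec_self_star _

end Matrix

theorem HasDerivWithinAt.re_star_dotProduct_mulVec_self {n : Type*} [Fintype n]
    {M : Matrix n n ℂ} (hM : M.IsHermitian) {u : ℝ → n → ℂ} {u' : n → ℂ} {s : Set ℝ} {t : ℝ}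
    (hu : HasDerivWithinAt u u' s t) :
    HasDerivWithinAt (fun t => (star (u t) ⬝ᵥ M *ᵥ u t).re)
      (2 * (star (u t) ⬝ᵥ M *ᵥ u').re) s t := by
  have hcoord : ∀ i, HasDerivWithinAt (fun t => u t i) (u' i) s t := hasDerivWithinAt_pi.mp hu
  have hform : HasDerivWithinAt (fun t => star (u t) ⬝ᵥ M *ᵥ u t)
      (star u' ⬝ᵥ M *ᵥ u t + star (u t) ⬝ᵥ M *ᵥ u') s t := by
    simp only [dotProduct, mulVec, Pi.star_apply, ← Finset.sum_add_distrib]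
    exact HasDerivWithinAt.fun_sum fun i _ =>
      ((hcoord i).star.mul (HasDerivWithinAt.fun_sum fun j _ =>
        (hcoord j).const_mul (M i j))).congr_deriv (by ring)
  refine (Complex.reCLM.hasFDerivAt.comp_hasDerivWithinAt t hform).congr_deriv ?_
  rw [Complex.reCLM_apply, Complex.add_re, hM.re_star_dotProduct_mulVec_comm u' (u t)]
  ring

theorem le_sqrt_mul_sqrt_of_forall_quadratic_nonneg {A B C : ℝ}
    (h : ∀ t : ℝ, 0 ≤ A * (t * t) + 2 * C * t + B) : C ≤ √A * √B := by
  have hdisc : C ^ 2 ≤ A * B := by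
    have := discrim_le_zero h
    rw [discrim] at this
    linarith
  rcases le_or_gt 0 A with hA | hA
  · rw [← Real.sqrt_mul hA]
    exact (le_abs_self C).trans (Real.abs_le_sqrt hdisc)
  · have hB : 0 ≤ B := by simpa using h 0
    have hC : C = 0 := by nlinarith
    rw [hC]
    positivity

theorem integral_re_star_dotProduct_mulVec_le {n X : Type*} [Fintype n] [MeasurableSpace X]
    {μ : Measure X} {M : Matrix n n ℂ} (hM : M.PosSemidef) {u v : X → n → ℂ}
    (huu : Integrable (fun x => (star (u x) ⬝ᵥ M *ᵥ u x).re) μ)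
    (hvv : Integrable (fun x => (star (v x) ⬝ᵥ M *ᵥ v x).re) μ)
    (huv : Integrable (fun x => (star (u x) ⬝ᵥ M *ᵥ v x).re) μ) :
    ∫ x, (star (u x) ⬝ᵥ M *ᵥ v x).re ∂μ
      ≤ √(∫ x, (star (u x) ⬝ᵥ M *ᵥ u x).re ∂μ)
        * √(∫ x, (star (v x) ⬝ᵥ M *ᵥ v x).re ∂μ) := by
  refine le_sqrt_mul_sqrt_of_forall_quadratic_nonneg fun t => ?_
  calc 0 ≤ ∫ x, (star (t • u x + v x) ⬝ᵥ M *ᵥ (t • u x + v x)).re ∂μ :=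
        integral_nonneg fun x => hM.re_star_dotProduct_mulVec_self_nonneg _
    _ = _ := by
      simp only [hM.isHermitian.re_star_dotProduct_mulVec_smul_add]
      rw [integral_add ((huu.mul_const _).fun_add (huv.const_mul _ |>.mul_const _)) hvv,
        integral_add (huu.mul_const _) (huv.const_mul _ |>.mul_const _),
        integral_mul_const, integral_mul_const, integral_const_mul]

theorem ContinuousOn.integrableOn_Ioc_cube {E : Type*} [NormedAddCommGroup E] {a b : ℝ}
    {f : ℝ × ℝ × ℝ → E} (hf : ContinuousOn f (Icc a b ×ˢ Icc a b ×ˢ Icc a b)) :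
    IntegrableOn f (Ioc a b ×ˢ Ioc a b ×ˢ Ioc a b) :=
  (hf.integrableOn_compact (isCompact_Icc.prod (isCompact_Icc.prod isCompact_Icc))).mono_set
    (prod_mono Ioc_subset_Icc_self (prod_mono Ioc_subset_Icc_self Ioc_subset_Icc_self))

section CubeIntegrals

variable {a b : ℝ}

section Fubini

variable {E : Type*} [NormedAddCommGroup E] [NormedSpace ℝ E]

theorem setIntegral_square_eq_iteratedIntegral (hab : a ≤ b) {f : ℝ → ℝ → E}
    (hf : IntegrableOn (fun p : ℝ × ℝ => f p.1 p.2) (Ioc a b ×ˢ Ioc a b)) :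
    ∫ p in Ioc a b ×ˢ Ioc a b, f p.1 p.2 = ∫ x in a..b, ∫ y in a..b, f x y := by
  rw [Measure.volume_eq_prod, setIntegral_prod _ hf]
  simp only [intervalIntegral.integral_of_le hab]

theorem setIntegral_square_eq_iteratedIntegral_swap (hab : a ≤ b) {f : ℝ → ℝ → E}
    (hf : IntegrableOn (fun p : ℝ × ℝ => f p.1 p.2) (Ioc a b ×ˢ Ioc a b)) :
    ∫ p in Ioc a b ×ˢ Ioc a b, f p.1 p.2 = ∫ y in a..b, ∫ x in a..b, f x y := by
  rw [IntegrableOn, Measure.volume_eq_prod, ← Measure.prod_restrict] at hf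
  rw [Measure.volume_eq_prod, ← Measure.prod_restrict, integral_prod_symm _ hf]
  simp only [intervalIntegral.integral_of_le hab]

theorem setIntegral_cube_eq_iteratedIntegral_xyz (hab : a ≤ b) {f : ℝ → ℝ → ℝ → E}
    (hf : IntegrableOn (fun p : ℝ × ℝ × ℝ => f p.1 p.2.1 p.2.2) (Ioc a b ×ˢ Ioc a b ×ˢ Ioc a b)) :
    ∫ p in Ioc a b ×ˢ Ioc a b ×ˢ Ioc a b, f p.1 p.2.1 p.2.2
      = ∫ x in a..b, ∫ y in a..b, ∫ z in a..b, f x y z := by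
  have hf' := hf
  rw [IntegrableOn, Measure.volume_eq_prod, ← Measure.prod_restrict] at hf'
  rw [Measure.volume_eq_prod, setIntegral_prod _ hf, intervalIntegral.integral_of_le hab]
  refine integral_congr_ae (hf'.prod_right_ae.mono fun x hx => ?_)
  exact setIntegral_square_eq_iteratedIntegral (f := f x) hab hx

theorem setIntegral_cube_eq_iteratedIntegral_xzy (hab : a ≤ b) {f : ℝ → ℝ → ℝ → E}
    (hf : IntegrableOn (fun p : ℝ × ℝ × ℝ => f p.1 p.2.1 p.2.2) (Ioc a b ×ˢ Ioc a b ×ˢ Ioc a b)) :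
    ∫ p in Ioc a b ×ˢ Ioc a b ×ˢ Ioc a b, f p.1 p.2.1 p.2.2
      = ∫ x in a..b, ∫ z in a..b, ∫ y in a..b, f x y z := by
  have hf' := hf
  rw [IntegrableOn, Measure.volume_eq_prod, ← Measure.prod_restrict] at hf'
  rw [Measure.volume_eq_prod, setIntegral_prod _ hf, intervalIntegral.integral_of_le hab]
  refine integral_congr_ae (hf'.prod_right_ae.mono fun x hx => ?_)
  exact setIntegral_square_eq_iteratedIntegral_swap (f := f x) hab hx

theorem setIntegral_cube_eq_iteratedIntegral_yzx (hab : a ≤ b) {f : ℝ → ℝ → ℝ → E}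
    (hf : IntegrableOn (fun p : ℝ × ℝ × ℝ => f p.1 p.2.1 p.2.2) (Ioc a b ×ˢ Ioc a b ×ˢ Ioc a b)) :
    ∫ p in Ioc a b ×ˢ Ioc a b ×ˢ Ioc a b, f p.1 p.2.1 p.2.2
      = ∫ y in a..b, ∫ z in a..b, ∫ x in a..b, f x y z := by
  rw [IntegrableOn, Measure.volume_eq_prod, ← Measure.prod_restrict] at hf
  rw [Measure.volume_eq_prod, ← Measure.prod_restrict, integral_prod_symm _ hf]
  rw [setIntegral_square_eq_iteratedIntegral (f := fun y z => ∫ x in Ioc a b, f x y z) hab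
    hf.integral_prod_right]
  simp only [intervalIntegral.integral_of_le hab]

end Fubini

section Divergence

variable {n : Type*} [Fintype n] {A : Matrix n n ℂ}

theorem integral_re_star_dotProduct_mulVec_deriv (hA : A.IsHermitian) (hab : a ≤ b)
    {u u' : ℝ → n → ℂ} (hu : ∀ t ∈ Icc a b, HasDerivWithinAt u (u' t) (Icc a b) t)
    (hu' : ContinuousOn u' (Icc a b)) :
    ∫ t in a..b, (star (u t) ⬝ᵥ A *ᵥ u' t).re
      = ((star (u b) ⬝ᵥ A *ᵥ u b).re - (star (u a) ⬝ᵥ A *ᵥ u a).re) / 2 := by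
  have hu_cont : ContinuousOn u (Icc a b) := fun t ht => (hu t ht).continuousWithinAt
  rw [eq_div_iff two_ne_zero, ← intervalIntegral.integral_mul_const]
  refine intervalIntegral.integral_eq_sub_of_hasDerivAt_of_le
    (f := fun t => (star (u t) ⬝ᵥ A *ᵥ u t).re) hab (by fun_prop) (fun t ht => ?_)
    (ContinuousOn.intervalIntegrable_of_Icc hab (by fun_prop))
  exact (((hu t (Ioo_subset_Icc_self ht)).re_star_dotProduct_mulVec_self hA).hasDerivAt
    (Icc_mem_nhds ht.1 ht.2)).congr_deriv (mul_comm _ _)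

variable {U U' : ℝ → ℝ → ℝ → n → ℂ}

theorem setIntegral_cube_re_star_dotProduct_mulVec_deriv_x (hA : A.IsHermitian) (hab : a ≤ b)
    (hU : ContinuousOn (fun p : ℝ × ℝ × ℝ => U p.1 p.2.1 p.2.2) (Icc a b ×ˢ Icc a b ×ˢ Icc a b))
    (hU'c : ContinuousOn (fun p : ℝ × ℝ × ℝ => U' p.1 p.2.1 p.2.2) (Icc a b ×ˢ Icc a b ×ˢ Icc a b))
    (hU' : ∀ x ∈ Icc a b, ∀ y ∈ Icc a b, ∀ z ∈ Icc a b,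
      HasDerivWithinAt (fun t => U t y z) (U' x y z) (Icc a b) x) :
    ∫ p in Ioc a b ×ˢ Ioc a b ×ˢ Ioc a b,
        (star (U p.1 p.2.1 p.2.2) ⬝ᵥ A *ᵥ U' p.1 p.2.1 p.2.2).re
      = (∫ y in a..b, ∫ z in a..b,
          ((star (U b y z) ⬝ᵥ A *ᵥ U b y z).re - (star (U a y z) ⬝ᵥ A *ᵥ U a y z).re)) / 2 := by
  rw [setIntegral_cube_eq_iteratedIntegral_yzx
      (f := fun x y z => (star (U x y z) ⬝ᵥ A *ᵥ U' x y z).re) hab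
      (ContinuousOn.integrableOn_Ioc_cube (by fun_prop)), ← intervalIntegral.integral_div]
  refine intervalIntegral.integral_congr fun y hy => ?_
  rw [← intervalIntegral.integral_div]
  refine intervalIntegral.integral_congr fun z hz => ?_
  rw [uIcc_of_le hab] at hy hz
  exact integral_re_star_dotProduct_mulVec_deriv hA hab (fun x hx => hU' x hx y hy z hz)
    (hU'c.comp (f := fun x => (x, y, z)) (by fun_prop) fun x hx => ⟨hx, hy, hz⟩)

theorem setIntegral_cube_re_star_dotProduct_mulVec_deriv_y (hA : A.IsHermitian) (hab : a ≤ b)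
    (hU : ContinuousOn (fun p : ℝ × ℝ × ℝ => U p.1 p.2.1 p.2.2) (Icc a b ×ˢ Icc a b ×ˢ Icc a b))
    (hU'c : ContinuousOn (fun p : ℝ × ℝ × ℝ => U' p.1 p.2.1 p.2.2) (Icc a b ×ˢ Icc a b ×ˢ Icc a b))
    (hU' : ∀ x ∈ Icc a b, ∀ y ∈ Icc a b, ∀ z ∈ Icc a b,
      HasDerivWithinAt (fun t => U x t z) (U' x y z) (Icc a b) y) :
    ∫ p in Ioc a b ×ˢ Ioc a b ×ˢ Ioc a b,
        (star (U p.1 p.2.1 p.2.2) ⬝ᵥ A *ᵥ U' p.1 p.2.1 p.2.2).re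
      = (∫ x in a..b, ∫ z in a..b,
          ((star (U x b z) ⬝ᵥ A *ᵥ U x b z).re - (star (U x a z) ⬝ᵥ A *ᵥ U x a z).re)) / 2 := by
  rw [setIntegral_cube_eq_iteratedIntegral_xzy
      (f := fun x y z => (star (U x y z) ⬝ᵥ A *ᵥ U' x y z).re) hab
      (ContinuousOn.integrableOn_Ioc_cube (by fun_prop)), ← intervalIntegral.integral_div]
  refine intervalIntegral.integral_congr fun x hx => ?_
  rw [← intervalIntegral.integral_div]
  refine intervalIntegral.integral_congr fun z hz => ?_
  rw [uIcc_of_le hab] at hx hz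
  exact integral_re_star_dotProduct_mulVec_deriv hA hab (fun y hy => hU' x hx y hy z hz)
    (hU'c.comp (f := fun y => (x, y, z)) (by fun_prop) fun y hy => ⟨hx, hy, hz⟩)

theorem setIntegral_cube_re_star_dotProduct_mulVec_deriv_z (hA : A.IsHermitian) (hab : a ≤ b)
    (hU : ContinuousOn (fun p : ℝ × ℝ × ℝ => U p.1 p.2.1 p.2.2) (Icc a b ×ˢ Icc a b ×ˢ Icc a b))
    (hU'c : ContinuousOn (fun p : ℝ × ℝ × ℝ => U' p.1 p.2.1 p.2.2) (Icc a b ×ˢ Icc a b ×ˢ Icc a b))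
    (hU' : ∀ x ∈ Icc a b, ∀ y ∈ Icc a b, ∀ z ∈ Icc a b,
      HasDerivWithinAt (fun t => U x y t) (U' x y z) (Icc a b) z) :
    ∫ p in Ioc a b ×ˢ Ioc a b ×ˢ Ioc a b,
        (star (U p.1 p.2.1 p.2.2) ⬝ᵥ A *ᵥ U' p.1 p.2.1 p.2.2).re
      = (∫ x in a..b, ∫ y in a..b,
          ((star (U x y b) ⬝ᵥ A *ᵥ U x y b).re - (star (U x y a) ⬝ᵥ A *ᵥ U x y a).re)) / 2 := by
  rw [setIntegral_cube_eq_iteratedIntegral_xyz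
      (f := fun x y z => (star (U x y z) ⬝ᵥ A *ᵥ U' x y z).re) hab
      (ContinuousOn.integrableOn_Ioc_cube (by fun_prop)), ← intervalIntegral.integral_div]
  refine intervalIntegral.integral_congr fun x hx => ?_
  rw [← intervalIntegral.integral_div]
  refine intervalIntegral.integral_congr fun y hy => ?_
  rw [uIcc_of_le hab] at hx hy
  exact integral_re_star_dotProduct_mulVec_deriv hA hab (hU' x hx y hy)
    (hU'c.comp (f := fun z => (x, y, z)) (by fun_prop) fun z hz => ⟨hx, hy, hz⟩)

end Divergence

end CubeIntegrals

theorem Complex.re_div_add_ofReal_nonneg {s : ℂ} {α : ℝ} (hs : 0 ≤ s.re) (hα : 0 ≤ α) :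
    0 ≤ (s / (s + α)).re := by
  rw [Complex.div_re]
  simp only [Complex.add_re, Complex.ofReal_re, Complex.add_im, Complex.ofReal_im, add_zero]
  rw [← add_div]
  exact div_nonneg (add_nonneg (by positivity) (mul_self_nonneg _)) (Complex.normSq_nonneg _)

noncomputable def pmlMetric (d α γ : ℝ) (s : ℂ) : ℂ := γ * (1 + d / (s + α))

theorem mul_re_le_re_mul_pmlMetric {s : ℂ} {d α γ : ℝ} (hs : 0 ≤ s.re) (hd : 0 ≤ d)
    (hα : 0 ≤ α) (hγ : 0 ≤ γ) : γ * s.re ≤ (s * pmlMetric d α γ s).re := by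
  have hsplit : s * pmlMetric d α γ s = γ * s + ((γ * d : ℝ) : ℂ) * (s / (s + α)) := by
    rw [pmlMetric]
    push_cast
    ring
  rw [hsplit, Complex.add_re, Complex.re_ofReal_mul, Complex.re_ofReal_mul]
  have := mul_nonneg (mul_nonneg hγ hd) (Complex.re_div_add_ofReal_nonneg hs hα)
  linarith

theorem ContinuousOn.of_smul_mulVec_eq {n 𝕜 X : Type*} [Fintype n] [DecidableEq n] [NormedField 𝕜]
    [TopologicalSpace X] {s : Set X} {Q : Matrix n n 𝕜} (hQ : IsUnit Q.det) {c : 𝕜} (hc : c ≠ 0)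
    {u r : X → n → 𝕜} (hr : ContinuousOn r s) (h : ∀ x ∈ s, c • Q *ᵥ u x = r x) :
    ContinuousOn u s := by
  refine (show ContinuousOn (fun x => c⁻¹ • Q⁻¹ *ᵥ r x) s by fun_prop).congr fun x hx => ?_
  dsimp only
  rw [← h x hx, mulVec_smul, smul_smul, inv_mul_cancel₀ hc, one_smul, mulVec_mulVec,
    nonsing_inv_mul _ hQ, one_mulVec]

theorem energy_estimate_of_laplace_system {n : Type*} [Fintype n] {M A₁ A₂ A₃ : Matrix n n ℂ}
    (hM : M.PosSemidef) (hA₁ : A₁.IsHermitian) (hA₂ : A₂.IsHermitian) (hA₃ : A₃.IsHermitian)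
    {a b : ℝ} (hab : a ≤ b) (c : ℂ) {U U₁ U₂ U₃ F : ℝ → ℝ → ℝ → n → ℂ}
    (hU₁ : ∀ x ∈ Icc a b, ∀ y ∈ Icc a b, ∀ z ∈ Icc a b,
      HasDerivWithinAt (fun t => U t y z) (U₁ x y z) (Icc a b) x)
    (hU₂ : ∀ x ∈ Icc a b, ∀ y ∈ Icc a b, ∀ z ∈ Icc a b,
      HasDerivWithinAt (fun t => U x t z) (U₂ x y z) (Icc a b) y)
    (hU₃ : ∀ x ∈ Icc a b, ∀ y ∈ Icc a b, ∀ z ∈ Icc a b,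
      HasDerivWithinAt (fun t => U x y t) (U₃ x y z) (Icc a b) z)
    (hUc : ContinuousOn (fun p : ℝ × ℝ × ℝ => U p.1 p.2.1 p.2.2) (Icc a b ×ˢ Icc a b ×ˢ Icc a b))
    (hU₁c : ContinuousOn (fun p : ℝ × ℝ × ℝ => U₁ p.1 p.2.1 p.2.2) (Icc a b ×ˢ Icc a b ×ˢ Icc a b))
    (hU₂c : ContinuousOn (fun p : ℝ × ℝ × ℝ => U₂ p.1 p.2.1 p.2.2) (Icc a b ×ˢ Icc a b ×ˢ Icc a b))
    (hU₃c : ContinuousOn (fun p : ℝ × ℝ × ℝ => U₃ p.1 p.2.1 p.2.2) (Icc a b ×ˢ Icc a b ×ˢ Icc a b))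
    (hFc : ContinuousOn (fun p : ℝ × ℝ × ℝ => F p.1 p.2.1 p.2.2) (Icc a b ×ˢ Icc a b ×ˢ Icc a b))
    (heq : ∀ x ∈ Icc a b, ∀ y ∈ Icc a b, ∀ z ∈ Icc a b,
      c • (M *ᵥ U x y z) = A₁ *ᵥ U₁ x y z + A₂ *ᵥ U₂ x y z + A₃ *ᵥ U₃ x y z + M *ᵥ F x y z) :
    c.re * ∫ p in Ioc a b ×ˢ Ioc a b ×ˢ Ioc a b,
        1 / 2 * (star (U p.1 p.2.1 p.2.2) ⬝ᵥ M *ᵥ U p.1 p.2.1 p.2.2).re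
      ≤ √(∫ p in Ioc a b ×ˢ Ioc a b ×ˢ Ioc a b,
            1 / 2 * (star (U p.1 p.2.1 p.2.2) ⬝ᵥ M *ᵥ U p.1 p.2.1 p.2.2).re)
        * √(∫ p in Ioc a b ×ˢ Ioc a b ×ˢ Ioc a b,
            1 / 2 * (star (F p.1 p.2.1 p.2.2) ⬝ᵥ M *ᵥ F p.1 p.2.1 p.2.2).re)
        + 1 / 4 *
          ((∫ y in a..b, ∫ z in a..b,
              ((star (U b y z) ⬝ᵥ A₁ *ᵥ U b y z).re - (star (U a y z) ⬝ᵥ A₁ *ᵥ U a y z).re)) +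
            (∫ x in a..b, ∫ z in a..b,
              ((star (U x b z) ⬝ᵥ A₂ *ᵥ U x b z).re - (star (U x a z) ⬝ᵥ A₂ *ᵥ U x a z).re)) +
            (∫ x in a..b, ∫ y in a..b,
              ((star (U x y b) ⬝ᵥ A₃ *ᵥ U x y b).re - (star (U x y a) ⬝ᵥ A₃ *ᵥ U x y a).re))) := by
  set box := Ioc a b ×ˢ Ioc a b ×ˢ Ioc a b
  have hbox : box ⊆ Icc a b ×ˢ Icc a b ×ˢ Icc a b :=
    prod_mono Ioc_subset_Icc_self (prod_mono Ioc_subset_Icc_self Ioc_subset_Icc_self)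
  have hpt : ∀ p ∈ box, c.re * (star (U p.1 p.2.1 p.2.2) ⬝ᵥ M *ᵥ U p.1 p.2.1 p.2.2).re
      = (star (U p.1 p.2.1 p.2.2) ⬝ᵥ A₁ *ᵥ U₁ p.1 p.2.1 p.2.2).re
        + (star (U p.1 p.2.1 p.2.2) ⬝ᵥ A₂ *ᵥ U₂ p.1 p.2.1 p.2.2).re
        + (star (U p.1 p.2.1 p.2.2) ⬝ᵥ A₃ *ᵥ U₃ p.1 p.2.1 p.2.2).re
        + (star (U p.1 p.2.1 p.2.2) ⬝ᵥ M *ᵥ F p.1 p.2.1 p.2.2).re := by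
    rintro ⟨x, y, z⟩ hp
    obtain ⟨hx, hy, hz⟩ := hbox hp
    have h := congrArg (fun w => (star (U x y z) ⬝ᵥ w).re) (heq x hx y hy z hz)
    simpa only [dotProduct_smul, smul_eq_mul, dotProduct_add, Complex.add_re,
      hM.isHermitian.re_mul_star_dotProduct_mulVec_self] using h
  have hidentity : c.re * ∫ p in box, (star (U p.1 p.2.1 p.2.2) ⬝ᵥ M *ᵥ U p.1 p.2.1 p.2.2).re
      = (∫ p in box, (star (U p.1 p.2.1 p.2.2) ⬝ᵥ A₁ *ᵥ U₁ p.1 p.2.1 p.2.2).re)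
        + (∫ p in box, (star (U p.1 p.2.1 p.2.2) ⬝ᵥ A₂ *ᵥ U₂ p.1 p.2.1 p.2.2).re)
        + (∫ p in box, (star (U p.1 p.2.1 p.2.2) ⬝ᵥ A₃ *ᵥ U₃ p.1 p.2.1 p.2.2).re)
        + ∫ p in box, (star (U p.1 p.2.1 p.2.2) ⬝ᵥ M *ᵥ F p.1 p.2.1 p.2.2).re := by
    rw [← integral_const_mul, setIntegral_congr_fun (by measurability) hpt]
    rw [integral_add, integral_add, integral_add] <;>
      exact ContinuousOn.integrableOn_Ioc_cube (by fun_prop)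
  have hCS := integral_re_star_dotProduct_mulVec_le hM (μ := volume.restrict box)
    (u := fun p => U p.1 p.2.1 p.2.2) (v := fun p => F p.1 p.2.1 p.2.2)
    (ContinuousOn.integrableOn_Ioc_cube (by fun_prop))
    (ContinuousOn.integrableOn_Ioc_cube (by fun_prop))
    (ContinuousOn.integrableOn_Ioc_cube (by fun_prop))
  rw [setIntegral_cube_re_star_dotProduct_mulVec_deriv_x hA₁ hab hUc hU₁c hU₁,
    setIntegral_cube_re_star_dotProduct_mulVec_deriv_y hA₂ hab hUc hU₂c hU₂,
    setIntegral_cube_re_star_dotProduct_mulVec_deriv_z hA₃ hab hUc hU₃c hU₃] at hidentity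
  have hhalf : ∀ X Y : ℝ, √(1 / 2 * X) * √(1 / 2 * Y) = 1 / 2 * (√X * √Y) := by
    intro X Y
    rw [Real.sqrt_mul (by norm_num), Real.sqrt_mul (by norm_num)]
    linear_combination (√X * √Y) * Real.mul_self_sqrt (by norm_num : (0 : ℝ) ≤ 1 / 2)
  simp only [integral_const_mul, hhalf]
  linarith

theorem pml_corner_energy_estimate_general (m : ℕ) (P Ax Ay Az : Matrix (Fin m) (Fin m) ℝ)
    (hP : P.PosDef)
    (hAx : Ax.IsSymm) (hAy : Ay.IsSymm) (hAz : Az.IsSymm)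
    (d α γ a b : ℝ) (hd : 0 ≤ d) (hα : 0 ≤ α) (hγ : 0 < γ) (ha : 0 < a)
    (s S : ℂ) (hs : s = (a : ℂ) + (b : ℂ) * Complex.I)
    (hS : S = (γ : ℂ) * (1 + (d : ℂ) / (s + (α : ℂ))))
    (U Ux Uy Uz F : ℝ → ℝ → ℝ → Fin m → ℂ)
    (hUx : ∀ x ∈ Set.Icc (-1 : ℝ) 1, ∀ y ∈ Set.Icc (-1 : ℝ) 1, ∀ z ∈ Set.Icc (-1 : ℝ) 1,
      HasDerivWithinAt (fun t => U t y z) (Ux x y z) (Set.Icc (-1 : ℝ) 1) x)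
    (hUy : ∀ x ∈ Set.Icc (-1 : ℝ) 1, ∀ y ∈ Set.Icc (-1 : ℝ) 1, ∀ z ∈ Set.Icc (-1 : ℝ) 1,
      HasDerivWithinAt (fun t => U x t z) (Uy x y z) (Set.Icc (-1 : ℝ) 1) y)
    (hUz : ∀ x ∈ Set.Icc (-1 : ℝ) 1, ∀ y ∈ Set.Icc (-1 : ℝ) 1, ∀ z ∈ Set.Icc (-1 : ℝ) 1,
      HasDerivWithinAt (fun t => U x y t) (Uz x y z) (Set.Icc (-1 : ℝ) 1) z)
    (hUxc : ContinuousOn (fun p : ℝ × ℝ × ℝ => Ux p.1 p.2.1 p.2.2)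
      (Set.Icc (-1 : ℝ) 1 ×ˢ Set.Icc (-1 : ℝ) 1 ×ˢ Set.Icc (-1 : ℝ) 1))
    (hUyc : ContinuousOn (fun p : ℝ × ℝ × ℝ => Uy p.1 p.2.1 p.2.2)
      (Set.Icc (-1 : ℝ) 1 ×ˢ Set.Icc (-1 : ℝ) 1 ×ˢ Set.Icc (-1 : ℝ) 1))
    (hUzc : ContinuousOn (fun p : ℝ × ℝ × ℝ => Uz p.1 p.2.1 p.2.2)
      (Set.Icc (-1 : ℝ) 1 ×ˢ Set.Icc (-1 : ℝ) 1 ×ˢ Set.Icc (-1 : ℝ) 1))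
    (hFc : ContinuousOn (fun p : ℝ × ℝ × ℝ => F p.1 p.2.1 p.2.2)
      (Set.Icc (-1 : ℝ) 1 ×ˢ Set.Icc (-1 : ℝ) 1 ×ˢ Set.Icc (-1 : ℝ) 1))
    (heq : ∀ x ∈ Set.Icc (-1 : ℝ) 1, ∀ y ∈ Set.Icc (-1 : ℝ) 1, ∀ z ∈ Set.Icc (-1 : ℝ) 1,
      (s * S) • ((P⁻¹.map Complex.ofReal).mulVec (U x y z)) =
        (Ax.map Complex.ofReal).mulVec (Ux x y z) +
          (Ay.map Complex.ofReal).mulVec (Uy x y z) +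
          (Az.map Complex.ofReal).mulVec (Uz x y z) +
          (P⁻¹.map Complex.ofReal).mulVec (F x y z))
    (normP : (ℝ → ℝ → ℝ → Fin m → ℂ) → ℝ)
    (hnorm : ∀ G : ℝ → ℝ → ℝ → Fin m → ℂ, normP G = Real.sqrt (∫ x in (-1 : ℝ)..1,
      ∫ y in (-1 : ℝ)..1, ∫ z in (-1 : ℝ)..1,
        (1 / 2) * ((star (G x y z)) ⬝ᵥ ((P⁻¹.map Complex.ofReal).mulVec (G x y z))).re))
    (BT : ℝ)
    (hBT : BT = (1 / 4) *
      ((∫ y in (-1 : ℝ)..1, ∫ z in (-1 : ℝ)..1,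
          (((star (U 1 y z)) ⬝ᵥ ((Ax.map Complex.ofReal).mulVec (U 1 y z))).re -
            ((star (U (-1) y z)) ⬝ᵥ ((Ax.map Complex.ofReal).mulVec (U (-1) y z))).re)) +
        (∫ x in (-1 : ℝ)..1, ∫ z in (-1 : ℝ)..1,
          (((star (U x 1 z)) ⬝ᵥ ((Ay.map Complex.ofReal).mulVec (U x 1 z))).re -
            ((star (U x (-1) z)) ⬝ᵥ ((Ay.map Complex.ofReal).mulVec (U x (-1) z))).re)) +
        (∫ x in (-1 : ℝ)..1, ∫ y in (-1 : ℝ)..1,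
          (((star (U x y 1)) ⬝ᵥ ((Az.map Complex.ofReal).mulVec (U x y 1))).re -
            ((star (U x y (-1))) ⬝ᵥ ((Az.map Complex.ofReal).mulVec (U x y (-1)))).re)))) :
    a * γ ≤ (s * S).re ∧ 0 < a * γ ∧
      (s * S).re * (normP U) ^ 2 ≤ normP U * normP F + BT := by
  have hsre : s.re = a := by simp [hs]
  have hre : a * γ ≤ (s * S).re := by
    rw [hS, ← hsre, mul_comm]
    exact mul_re_le_re_mul_pmlMetric (hsre ▸ ha.le) hd hα hγ.le
  have hsS : s * S ≠ 0 := fun h => by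
    rw [h, Complex.zero_re] at hre
    nlinarith
  have hQdet : IsUnit (P⁻¹.map Complex.ofReal).det := by
    have := ((Matrix.isUnit_iff_isUnit_det _).mp hP.inv.isUnit).map Complex.ofRealHom
    rwa [RingHom.map_det] at this
  -- `U` is not assumed continuous: the equation expresses it through `Ux, Uy, Uz, F`.
  have hUc : ContinuousOn (fun p : ℝ × ℝ × ℝ => U p.1 p.2.1 p.2.2)
      (Icc (-1 : ℝ) 1 ×ˢ Icc (-1 : ℝ) 1 ×ˢ Icc (-1 : ℝ) 1) :=
    .of_smul_mulVec_eq hQdet hsS (by fun_prop) fun p hp => heq p.1 hp.1 p.2.1 hp.2.1 p.2.2 hp.2.2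
  have hnormP : ∀ G : ℝ → ℝ → ℝ → Fin m → ℂ,
      ContinuousOn (fun p : ℝ × ℝ × ℝ => G p.1 p.2.1 p.2.2)
        (Icc (-1 : ℝ) 1 ×ˢ Icc (-1 : ℝ) 1 ×ˢ Icc (-1 : ℝ) 1) →
      normP G = √(∫ p in Ioc (-1 : ℝ) 1 ×ˢ Ioc (-1 : ℝ) 1 ×ˢ Ioc (-1 : ℝ) 1,
        1 / 2 * (star (G p.1 p.2.1 p.2.2) ⬝ᵥ (P⁻¹.map Complex.ofReal) *ᵥ G p.1 p.2.1 p.2.2).re) :=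
    fun G hG => by
      rw [hnorm, ← setIntegral_cube_eq_iteratedIntegral_xyz (by norm_num)
        (ContinuousOn.integrableOn_Ioc_cube (by fun_prop))]
  have hQ := hP.inv.posSemidef.map_ofReal
  refine ⟨hre, by positivity, ?_⟩
  rw [hnormP U hUc, hnormP F hFc, Real.sq_sqrt (setIntegral_nonneg (by measurability)
    fun p _ => mul_nonneg (by norm_num) (hQ.re_star_dotProduct_mulVec_self_nonneg _)), hBT]
  exact energy_estimate_of_laplace_system hQ hAx.isHermitian_map_ofReal hAy.isHermitian_map_ofReal
    hAz.isHermitian_map_ofReal (by norm_num) (s * S) hUx hUy hUz hUc hUxc hUyc hUzc hFc heq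

/-- 3D PML corner energy estimate in Laplace space: if
`(sS)P⁻¹Ũ = Σ_{ξ=x,y,z} A_ξ ∂Ũ/∂ξ + P⁻¹F̃` on `[−1,1]³` with `S = γ(1 + d/(s+α))`,
`s = a+ib`, `a > 0`, then `Re(sS) ≥ aγ > 0` and
`Re(sS)‖Ũ‖_P² ≤ ‖Ũ‖_P‖F̃‖_P + BT`. -/
theorem pml_corner_energy_estimate (m : ℕ) (P Ax Ay Az : Matrix (Fin m) (Fin m) ℝ)
    (hP : P.PosDef) (hPs : P.IsSymm)
    (hAx : Ax.IsSymm) (hAy : Ay.IsSymm) (hAz : Az.IsSymm)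
    (d α γ a b : ℝ) (hd : 0 ≤ d) (hα : 0 ≤ α) (hγ : 0 < γ) (ha : 0 < a)
    (s S : ℂ) (hs : s = (a : ℂ) + (b : ℂ) * Complex.I)
    (hS : S = (γ : ℂ) * (1 + (d : ℂ) / (s + (α : ℂ))))
    (U Ux Uy Uz F : ℝ → ℝ → ℝ → Fin m → ℂ)
    (hUx : ∀ x ∈ Set.Icc (-1 : ℝ) 1, ∀ y ∈ Set.Icc (-1 : ℝ) 1, ∀ z ∈ Set.Icc (-1 : ℝ) 1,
      HasDerivWithinAt (fun t => U t y z) (Ux x y z) (Set.Icc (-1 : ℝ) 1) x)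
    (hUy : ∀ x ∈ Set.Icc (-1 : ℝ) 1, ∀ y ∈ Set.Icc (-1 : ℝ) 1, ∀ z ∈ Set.Icc (-1 : ℝ) 1,
      HasDerivWithinAt (fun t => U x t z) (Uy x y z) (Set.Icc (-1 : ℝ) 1) y)
    (hUz : ∀ x ∈ Set.Icc (-1 : ℝ) 1, ∀ y ∈ Set.Icc (-1 : ℝ) 1, ∀ z ∈ Set.Icc (-1 : ℝ) 1,
      HasDerivWithinAt (fun t => U x y t) (Uz x y z) (Set.Icc (-1 : ℝ) 1) z)
    (hUxc : ContinuousOn (fun p : ℝ × ℝ × ℝ => Ux p.1 p.2.1 p.2.2)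
      (Set.Icc (-1 : ℝ) 1 ×ˢ Set.Icc (-1 : ℝ) 1 ×ˢ Set.Icc (-1 : ℝ) 1))
    (hUyc : ContinuousOn (fun p : ℝ × ℝ × ℝ => Uy p.1 p.2.1 p.2.2)
      (Set.Icc (-1 : ℝ) 1 ×ˢ Set.Icc (-1 : ℝ) 1 ×ˢ Set.Icc (-1 : ℝ) 1))
    (hUzc : ContinuousOn (fun p : ℝ × ℝ × ℝ => Uz p.1 p.2.1 p.2.2)
      (Set.Icc (-1 : ℝ) 1 ×ˢ Set.Icc (-1 : ℝ) 1 ×ˢ Set.Icc (-1 : ℝ) 1))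
    (hFc : ContinuousOn (fun p : ℝ × ℝ × ℝ => F p.1 p.2.1 p.2.2)
      (Set.Icc (-1 : ℝ) 1 ×ˢ Set.Icc (-1 : ℝ) 1 ×ˢ Set.Icc (-1 : ℝ) 1))
    (heq : ∀ x ∈ Set.Icc (-1 : ℝ) 1, ∀ y ∈ Set.Icc (-1 : ℝ) 1, ∀ z ∈ Set.Icc (-1 : ℝ) 1,
      (s * S) • ((P⁻¹.map Complex.ofReal).mulVec (U x y z)) =
        (Ax.map Complex.ofReal).mulVec (Ux x y z) +
          (Ay.map Complex.ofReal).mulVec (Uy x y z) +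
          (Az.map Complex.ofReal).mulVec (Uz x y z) +
          (P⁻¹.map Complex.ofReal).mulVec (F x y z))
    (normP : (ℝ → ℝ → ℝ → Fin m → ℂ) → ℝ)
    (hnorm : ∀ G : ℝ → ℝ → ℝ → Fin m → ℂ, normP G = Real.sqrt (∫ x in (-1 : ℝ)..1,
      ∫ y in (-1 : ℝ)..1, ∫ z in (-1 : ℝ)..1,
        (1 / 2) * ((star (G x y z)) ⬝ᵥ ((P⁻¹.map Complex.ofReal).mulVec (G x y z))).re))
    (BT : ℝ)
    (hBT : BT = (1 / 4) *
      ((∫ y in (-1 : ℝ)..1, ∫ z in (-1 : ℝ)..1,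
          (((star (U 1 y z)) ⬝ᵥ ((Ax.map Complex.ofReal).mulVec (U 1 y z))).re -
            ((star (U (-1) y z)) ⬝ᵥ ((Ax.map Complex.ofReal).mulVec (U (-1) y z))).re)) +
        (∫ x in (-1 : ℝ)..1, ∫ z in (-1 : ℝ)..1,
          (((star (U x 1 z)) ⬝ᵥ ((Ay.map Complex.ofReal).mulVec (U x 1 z))).re -
            ((star (U x (-1) z)) ⬝ᵥ ((Ay.map Complex.ofReal).mulVec (U x (-1) z))).re)) +
        (∫ x in (-1 : ℝ)..1, ∫ y in (-1 : ℝ)..1,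
          (((star (U x y 1)) ⬝ᵥ ((Az.map Complex.ofReal).mulVec (U x y 1))).re -
            ((star (U x y (-1))) ⬝ᵥ ((Az.map Complex.ofReal).mulVec (U x y (-1)))).re)))) :
    a * γ ≤ (s * S).re ∧ 0 < a * γ ∧
      (s * S).re * (normP U) ^ 2 ≤ normP U * normP F + BT :=
  pml_corner_energy_estimate_general m P Ax Ay Az hP hAx hAy hAz d α γ a b hd hα hγ ha s S hs hS U
    Ux Uy Uz F hUx hUy hUz hUxc hUyc hUzc hFc heq normP hnorm BT hBT
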